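/- Let Λ be a λ-synchronizing subshift homeomorphic to a Cantor set. If Λ is synchronizingly transitive (for all words μ, ν both μ ≻ ν and ν ≻ μ hold, where μ ≻ ν means there is a word η with Γ_*^+(ν) = Γ_*^+(μην)), then the λ-synchronizing λ-graph system 𝔏^{λ(Λ)} is λ-irreducible. -/

import Mathlib

open scoped Classical

/-- The language of a subshift over alphabet `A`: nonempty, factorial
(closed under subwords) and extendable on both sides. -/
structure ShiftLang (A : Type*) where
  L : Set (List A)
  nil_mem : [] ∈ L
  factor : ∀ u v w : List A, u ++ v ++ w ∈ L → v ∈ L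
  ext_left : ∀ w ∈ L, ∃ a : A, (a :: w) ∈ L
  ext_right : ∀ w ∈ L, ∃ a : A, (w ++ [a]) ∈ L

namespace ShiftLang

variable {A : Type*} (Λ : ShiftLang A)

/-- Admissible words of length `l`. -/
def B (l : ℕ) : Set (List A) := {w | w ∈ Λ.L ∧ w.length = l}

/-- `Γ_l^-(μ)`: admissible words `ν` of length `l` with `νμ` admissible. -/
def Γminus (l : ℕ) (μ : List A) : Set (List A) := {ν | ν ∈ Λ.B l ∧ ν ++ μ ∈ Λ.L}

/-- `Γ_*^+(μ)`: followers of `μ`. -/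
def Γplus (μ : List A) : Set (List A) := {ω | μ ++ ω ∈ Λ.L}

/-- `S_l(Λ)`: the set of `l`-synchronizing words. -/
def Sync (l : ℕ) : Set (List A) :=
  {μ | μ ∈ Λ.L ∧ ∀ ω ∈ Λ.Γplus μ, Λ.Γminus l μ = Λ.Γminus l (μ ++ ω)}

/-- Irreducibility of a subshift in terms of its language. -/
def Irreducible : Prop := ∀ μ ∈ Λ.L, ∀ ν ∈ Λ.L, ∃ η, μ ++ η ++ ν ∈ Λ.L

/-- `λ`-synchronization of a subshift. -/
def IsLambdaSync : Prop :=
  ∀ l : ℕ, ∀ η ∈ Λ.B l, ∀ k : ℕ, l ≤ k → ∃ ν ∈ Λ.Sync k, η ++ ν ∈ Λ.Sync (k - l)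

/-- `μ ≻ ν` : there is `η` with `Γ_*^+(ν) = Γ_*^+(μην)`. -/
def Succ (μ ν : List A) : Prop := ∃ η, Λ.Γplus ν = Λ.Γplus (μ ++ η ++ ν)

/-- Synchronizing transitivity. -/
def SyncTransitive : Prop := ∀ μ ∈ Λ.L, ∀ ν ∈ Λ.L, Λ.Succ μ ν ∧ Λ.Succ ν μ

/-- The right one-sided shift space `X_Λ`. -/
def X : Set (ℕ → A) := {x | ∀ n : ℕ, (List.ofFn fun i : Fin n => x i) ∈ Λ.L}

end ShiftLang

/-- A (left-resolving–free) `λ`-graph system: a labeled Bratteli diagram with `ι`-maps. -/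
structure LGS (A : Type*) where
  V : ℕ → Type
  edge : ∀ l : ℕ, V l → A → V (l + 1) → Prop
  ι : ∀ l : ℕ, V (l + 1) → V l
  ι_surj : ∀ l, Function.Surjective (ι l)
  exists_succ : ∀ l (v : V l), ∃ a u, edge l v a u
  exists_pred : ∀ l (u : V (l + 1)), ∃ a v, edge l v a u
  local_prop : ∀ l (u : V l) (v : V (l + 2)) (a : A),
    (∃ w, edge (l + 1) w a v ∧ ι l w = u) ↔ edge l u a (ι (l + 1) v)

namespace LGS

variable {A : Type*} (G : LGS A)

/-- Labeled paths in a `λ`-graph system. -/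
inductive Path : ∀ {l m : ℕ}, G.V l → List A → G.V m → Prop
  | nil {l : ℕ} (v : G.V l) : Path v [] v
  | cons {l m : ℕ} {v : G.V l} {a : A} {u : G.V (l + 1)} {w : List A} {x : G.V m} :
      G.edge l v a u → Path u w x → Path v (a :: w) x

/-- The word `w` leaves the vertex `v`. -/
def Leaves {l : ℕ} (v : G.V l) (w : List A) : Prop := ∃ m, ∃ u : G.V m, G.Path v w u

/-- The vertex `v` launches the word `w`: `w` leaves `v` and no other vertex of `V_l`. -/
def Launches {l : ℕ} (v : G.V l) (w : List A) : Prop :=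
  G.Leaves v w ∧ ∀ v' : G.V l, G.Leaves v' w → v' = v

/-- Left-resolving: edges with the same label have distinct terminal vertices. -/
def LeftResolving : Prop :=
  ∀ (l : ℕ) (v v' : G.V l) (a : A) (u : G.V (l + 1)), G.edge l v a u → G.edge l v' a u → v = v'

/-- The predecessor set `Γ_l^-(v)` of a vertex: words of length `l` labeling paths from `V_0` to `v`. -/
def ΓminusV {l : ℕ} (v : G.V l) : Set (List A) :=
  {w | w.length = l ∧ ∃ v0 : G.V 0, G.Path v0 w v}

/-- Predecessor-separated: distinct vertices of `V_l` have distinct predecessor sets. -/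
def PredecessorSeparated : Prop := ∀ (l : ℕ) (u v : G.V l), G.ΓminusV u = G.ΓminusV v → u = v

/-- A `λ`-synchronizing `λ`-graph system: every vertex launches some word. -/
def LambdaSynchronizing : Prop := ∀ (l : ℕ) (v : G.V l), ∃ w : List A, G.Launches v w

/-- `G` presents the subshift `Λ`: the language of `Λ` is the set of words labeling paths of `G`. -/
def Presents (Λ : ShiftLang A) : Prop :=
  ∀ w : List A, w ∈ Λ.L ↔ ∃ (l : ℕ) (v : G.V l), G.Leaves v w

/-- Iterated `ι`-map `ι^n : V_{l+n} → V_l`. -/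
def iotaPow : ∀ (n : ℕ) {l : ℕ}, G.V (l + n) → G.V l
  | 0, _, v => v
  | n + 1, l, v => iotaPow n (G.ι (l + n) v)

/-- `ι`-irreducibility of a `λ`-graph system. -/
def IotaIrreducible : Prop :=
  ∀ (l : ℕ) (v u : G.V l) (γ : List A) (t : G.V (l + γ.length)), G.Path u γ t →
    ∃ (n : ℕ) (u' : G.V (l + n)) (w : List A) (t' : G.V (l + n + γ.length)),
      G.iotaPow n u' = u ∧ G.Path v w u' ∧ G.Path u' γ t' ∧
      G.iotaPow n (cast (congrArg G.V (Nat.add_right_comm l n γ.length)) t') = t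

/-- `λ`-irreducibility of a `λ`-graph system. -/
def LambdaIrreducible : Prop :=
  ∀ (l : ℕ) (u v : G.V l), ∃ L : ℕ, ∀ w : G.V (l + L),
    G.iotaPow L w = u → ∃ γ : List A, G.Path v γ w

/-- `Γ_∞^+(v)`: infinite label sequences of infinite paths starting at `v`. -/
def GammaInf {l : ℕ} (v : G.V l) : Set (ℕ → A) :=
  {x | ∃ vs : ∀ n : ℕ, G.V (l + n), vs 0 = v ∧ ∀ n, G.edge (l + n) (vs n) (x n) (vs (n + 1))}

/-- Condition (I): every vertex has at least two distinct infinite follower label sequences. -/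
def ConditionI : Prop := ∀ (l : ℕ) (v : G.V l), ∃ x ∈ G.GammaInf v, ∃ y ∈ G.GammaInf v, x ≠ y

/-- `G` is (isomorphic to) the `λ`-synchronizing `λ`-graph system `𝔏^{λ(Λ)}` of `Λ`:
vertices of `V_l` correspond to `l`-past equivalence classes of `l`-synchronizing words
(identified via their predecessor sets), and edges are as in the canonical construction. -/
def IsLambdaSyncSystem (Λ : ShiftLang A) : Prop :=
  (∀ (l : ℕ) (v : G.V l), ∃ μ ∈ Λ.Sync l, G.ΓminusV v = Λ.Γminus l μ) ∧
  (∀ l : ℕ, ∀ μ ∈ Λ.Sync l, ∃ v : G.V l, G.ΓminusV v = Λ.Γminus l μ) ∧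
  (∀ (l : ℕ) (v : G.V l) (a : A) (u : G.V (l + 1)),
    G.edge l v a u ↔ ∃ ν ∈ Λ.Sync (l + 1), (a :: ν) ∈ Λ.L ∧
      G.ΓminusV u = Λ.Γminus (l + 1) ν ∧ G.ΓminusV v = Λ.Γminus l (a :: ν))

end LGS

/-- The partial isometry `S_w = S_{w_1} ⋯ S_{w_k}` associated with a word. -/
def sword {A R : Type*} [Monoid R] (S : A → R) (w : List A) : R := (w.map S).prod

/-!
Let `u, v ∈ V_l` be represented by synchronizing words `μ_u, μ_v`, and fix `ρ ∈ Γ_l^-(μ_u)`.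
Synchronizing transitivity gives `η` with `Γ_*^+(ρ) = Γ_*^+(μ_v a η ρ)`; put `γ = μ_v a η ρ` and
`L = |γ|`. A vertex `w ∈ V_{l+L}` over `u` is represented by some `ν` with `ρν` admissible, hence
`γν` admissible. Reading `γ` backwards from `w` through the vertices represented by the
suffixes of `γν` gives a path ending at `w` and starting at a vertex whose predecessor set is
`Γ_l^-(γν) = Γ_l^-(μ_v)`, the predecessor set of `v`, because `μ_v` is `l`-synchronizing.
Edges only see predecessor sets, so the path can be rerooted at `v`; the letter `a` is there
to make `γ` nonempty, since vertices need not be separated by their predecessor sets.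
-/

namespace ShiftLang

variable {A : Type*} (Λ : ShiftLang A)

theorem prefix_mem {u v : List A} (h : u ++ v ∈ Λ.L) : u ∈ Λ.L :=
  Λ.factor [] u v (by simpa using h)

theorem suffix_mem {u v : List A} (h : u ++ v ∈ Λ.L) : v ∈ Λ.L :=
  Λ.factor u v [] (by simpa using h)

theorem exists_left_extension (n : ℕ) {μ : List A} (hμ : μ ∈ Λ.L) :
    ∃ σ : List A, σ.length = n ∧ σ ++ μ ∈ Λ.L := by
  induction n with
  | zero => exact ⟨[], rfl, hμ⟩
  | succ n ih =>
    obtain ⟨σ, hlen, hσμ⟩ := ih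
    obtain ⟨a, ha⟩ := Λ.ext_left (σ ++ μ) hσμ
    exact ⟨a :: σ, by simp [hlen], ha⟩

theorem Γminus_nonempty (l : ℕ) {μ : List A} (hμ : μ ∈ Λ.L) : (Λ.Γminus l μ).Nonempty := by
  obtain ⟨σ, hlen, hσμ⟩ := Λ.exists_left_extension l hμ
  exact ⟨σ, ⟨Λ.prefix_mem hσμ, hlen⟩, hσμ⟩

theorem Γminus_cons (k : ℕ) (a : A) (τ : List A) :
    Λ.Γminus k (a :: τ) = {ρ | ρ ∈ Λ.B k ∧ ρ ++ [a] ∈ Λ.Γminus (k + 1) τ} := by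
  ext ρ
  constructor
  · rintro ⟨hB, hρ⟩
    exact ⟨hB, ⟨Λ.prefix_mem (u := ρ ++ [a]) (by simpa using hρ), by simp [hB.2]⟩,
      by simpa using hρ⟩
  · rintro ⟨hB, -, hρ⟩
    exact ⟨hB, by simpa using hρ⟩

theorem cons_mem_Sync {k : ℕ} {a : A} {μ : List A} (hμ : μ ∈ Λ.Sync (k + 1))
    (h : a :: μ ∈ Λ.L) : a :: μ ∈ Λ.Sync k := by
  refine ⟨h, fun ω hω => ?_⟩
  have hω' : ω ∈ Λ.Γplus μ := Λ.suffix_mem (u := [a]) hω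
  rw [List.cons_append, Γminus_cons, Γminus_cons, hμ.2 ω hω']

theorem append_mem_Sync {k : ℕ} (σ : List A) {ν : List A}
    (hν : ν ∈ Λ.Sync (k + σ.length)) (h : σ ++ ν ∈ Λ.L) : σ ++ ν ∈ Λ.Sync k := by
  induction σ generalizing k with
  | nil => simpa using hν
  | cons a σ ih =>
    have hν' : ν ∈ Λ.Sync (k + 1 + σ.length) := by
      rwa [List.length_cons, ← Nat.add_assoc, Nat.add_right_comm] at hν
    exact Λ.cons_mem_Sync (ih hν' (Λ.suffix_mem (u := [a]) h)) h

end ShiftLang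

namespace LGS

variable {A : Type*} (G : LGS A)

theorem Path.exists_lift {ρ : List A} :
    ∀ {l m : ℕ} {u : G.V l} {q : G.V (m + 1)}, G.Path u ρ (G.ι m q) →
      ∃ u' : G.V (l + 1), G.ι l u' = u ∧ G.Path u' ρ q := by
  induction ρ with
  | nil =>
    intro l m u q h
    cases h
    exact ⟨q, rfl, .nil q⟩
  | cons a ρ ih =>
    intro l m u q h
    cases h with
    | cons e p =>
      obtain ⟨t', rfl, p'⟩ := ih p
      obtain ⟨u', e', rfl⟩ := (G.local_prop l u t' a).mpr e
      exact ⟨u', rfl, .cons e' p'⟩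

theorem exists_cons_mem_ΓminusV_of_mem_ΓminusV_ι {l : ℕ} {w : G.V (l + 1)} {ρ : List A}
    (h : ρ ∈ G.ΓminusV (G.ι l w)) : ∃ a : A, a :: ρ ∈ G.ΓminusV w := by
  obtain ⟨hlen, v₀, p⟩ := h
  obtain ⟨v₁, -, p'⟩ := Path.exists_lift G p
  obtain ⟨a, v₀', e⟩ := G.exists_pred 0 v₁
  exact ⟨a, by simpa using hlen, v₀', .cons e p'⟩

theorem exists_append_mem_ΓminusV_of_mem_ΓminusV_iotaPow (n : ℕ) :
    ∀ {l : ℕ} {w : G.V (l + n)} {ρ : List A}, ρ ∈ G.ΓminusV (G.iotaPow n w) →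
      ∃ σ : List A, σ.length = n ∧ σ ++ ρ ∈ G.ΓminusV w := by
  induction n with
  | zero => exact fun h => ⟨[], rfl, h⟩
  | succ n ih =>
    intro l w ρ h
    obtain ⟨σ, hlen, hσ⟩ := ih h
    obtain ⟨a, ha⟩ := G.exists_cons_mem_ΓminusV_of_mem_ΓminusV_ι hσ
    exact ⟨a :: σ, by simp [hlen], ha⟩

section LambdaSyncSystem

variable {G} {Λ : ShiftLang A}

theorem edge_of_ΓminusV_eq (hsys : G.IsLambdaSyncSystem Λ) {l : ℕ} {v v' : G.V l}
    (hvv' : G.ΓminusV v = G.ΓminusV v') {a : A} {t : G.V (l + 1)} (e : G.edge l v' a t) :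
    G.edge l v a t := by
  obtain ⟨ν, hν, haν, ht, hv'⟩ := (hsys.2.2 l v' a t).mp e
  exact (hsys.2.2 l v a t).mpr ⟨ν, hν, haν, ht, hvv' ▸ hv'⟩

theorem Path.of_ΓminusV_eq (hsys : G.IsLambdaSyncSystem Λ) {l m : ℕ} {v v' : G.V l}
    {x : G.V m} (hvv' : G.ΓminusV v = G.ΓminusV v') {γ : List A} (hγ : γ ≠ [])
    (h : G.Path v' γ x) : G.Path v γ x := by
  cases h with
  | nil => exact absurd rfl hγ
  | cons e p => exact .cons (edge_of_ΓminusV_eq hsys hvv' e) p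

theorem exists_path_of_append_mem (hsys : G.IsLambdaSyncSystem Λ) (γ : List A) :
    ∀ {l m : ℕ}, l + γ.length = m → ∀ {ν : List A}, ν ∈ Λ.Sync m → γ ++ ν ∈ Λ.L →
      ∀ {w : G.V m}, G.ΓminusV w = Λ.Γminus m ν →
        ∃ v : G.V l, G.ΓminusV v = Λ.Γminus l (γ ++ ν) ∧ G.Path v γ w := by
  induction γ with
  | nil =>
    rintro l m rfl ν - - w hw
    exact ⟨w, hw, .nil w⟩
  | cons a γ ih =>
    rintro l m hlm ν hν hγν w hw
    rw [List.length_cons, ← Nat.add_assoc, Nat.add_right_comm] at hlm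
    obtain ⟨v₁, hv₁, p⟩ := ih hlm hν (Λ.suffix_mem (u := [a]) hγν) hw
    have hsync : γ ++ ν ∈ Λ.Sync (l + 1) :=
      Λ.append_mem_Sync γ (hlm ▸ hν) (Λ.suffix_mem (u := [a]) hγν)
    obtain ⟨v, hv⟩ := hsys.2.1 l _ (Λ.cons_mem_Sync hsync hγν)
    exact ⟨v, hv, .cons ((hsys.2.2 l v a v₁).mpr ⟨_, hsync, hγν, hv₁, hv⟩) p⟩

end LambdaSyncSystem

end LGS

theorem lambdaIrreducible_of_syncTransitive_general
    {A : Type*}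
    (G : LGS A) (Λ : ShiftLang A)
    (hsys : G.IsLambdaSyncSystem Λ)
    (htrans : Λ.SyncTransitive) :
    G.LambdaIrreducible := by
  intro l u v
  obtain ⟨μu, hμu, hu⟩ := hsys.1 l u
  obtain ⟨μv, hμv, hv⟩ := hsys.1 l v
  obtain ⟨ρ, hρ⟩ := Λ.Γminus_nonempty l hμu.1
  obtain ⟨a, ha⟩ := Λ.ext_right μv hμv.1
  obtain ⟨η, hη⟩ := (htrans (μv ++ [a]) ha ρ hρ.1.1).1
  set γ := μv ++ [a] ++ η ++ ρ
  refine ⟨γ.length, fun w hw => ?_⟩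
  obtain ⟨ν, hν, hwν⟩ := hsys.1 _ w
  have hρν : ρ ++ ν ∈ Λ.L := by
    obtain ⟨σ, -, hσρ⟩ := G.exists_append_mem_ΓminusV_of_mem_ΓminusV_iotaPow γ.length
      (w := w) (hw ▸ hu ▸ hρ)
    rw [hwν] at hσρ
    exact Λ.suffix_mem (u := σ) (by simpa using hσρ.2)
  have hγν : γ ++ ν ∈ Λ.L := show ν ∈ Λ.Γplus γ from hη ▸ hρν
  obtain ⟨v', hv', p⟩ := LGS.exists_path_of_append_mem hsys γ rfl hν hγν hwν
  have hvv' : G.ΓminusV v = G.ΓminusV v' := by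
    rw [hv, hv', hμv.2 ([a] ++ η ++ ρ ++ ν) (by simpa [γ, ShiftLang.Γplus] using hγν)]
    simp [γ]
  exact ⟨γ, LGS.Path.of_ΓminusV_eq hsys hvv' (by simp [γ]) p⟩

/-- if a `λ`-synchronizing subshift `Λ` homeomorphic to a Cantor set is
synchronizingly transitive, then its `λ`-synchronizing `λ`-graph system `𝔏^{λ(Λ)}` is
`λ`-irreducible. -/
theorem lambdaIrreducible_of_syncTransitive
    {A : Type*} [TopologicalSpace A] [DiscreteTopology A]
    (G : LGS A) (Λ : ShiftLang A)
    (hirr : Λ.Irreducible) (hls : Λ.IsLambdaSync) (hsys : G.IsLambdaSyncSystem Λ)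
    (hCantor : Nonempty
      (({x : ℤ → A | ∀ (i : ℤ) (n : ℕ), (List.ofFn fun k : Fin n => x (i + (k : ℤ))) ∈ Λ.L}
        : Set (ℤ → A)) ≃ₜ (ℕ → Bool)))
    (htrans : Λ.SyncTransitive) :
    G.LambdaIrreducible :=
  lambdaIrreducible_of_syncTransitive_general G Λ hsys htrans
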